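/- For every (s,φ), the coefficients of the first fundamental form of α satisfy G(s,φ) := ⟨∂α/∂φ(s,φ), ∂α/∂φ(s,φ)⟩ = r(s)²·(1−r'(s)²) and F(s,φ) := ⟨∂α/∂s(s,φ), ∂α/∂φ(s,φ)⟩ = τ(s)·r(s)²·(1−r'(s)²) + κ(s)·r'(s)·r(s)²·√(1−r'(s)²)·sin φ. -/

import Mathlib

open scoped RealInnerProductSpace

noncomputable def cross3 (u v : EuclideanSpace ℝ (Fin 3)) : EuclideanSpace ℝ (Fin 3) :=
  (WithLp.equiv 2 (Fin 3 → ℝ)).symm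
    ![u 1 * v 2 - u 2 * v 1, u 2 * v 0 - u 0 * v 2, u 0 * v 1 - u 1 * v 0]

lemma inner_cross3_left (u v : EuclideanSpace ℝ (Fin 3)) : ⟪u, cross3 u v⟫ = 0 := by
  simp [cross3, PiLp.inner_apply, Fin.sum_univ_three, RCLike.inner_apply]; ring

lemma inner_cross3_right (u v : EuclideanSpace ℝ (Fin 3)) : ⟪v, cross3 u v⟫ = 0 := by
  simp [cross3, PiLp.inner_apply, Fin.sum_univ_three, RCLike.inner_apply]; ring

lemma inner_cross3_self (u v : EuclideanSpace ℝ (Fin 3)) :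
    ⟪cross3 u v, cross3 u v⟫ = ⟪u,u⟫ * ⟪v,v⟫ - ⟪u,v⟫ ^ 2 := by
  simp only [PiLp.inner_apply, Fin.sum_univ_three]
  simp [cross3, PiLp.inner_apply, Fin.sum_univ_three, RCLike.inner_apply]; ring

lemma cross3_self (v : EuclideanSpace ℝ (Fin 3)) : cross3 v v = 0 := by
  ext i; fin_cases i <;> (simp [cross3]; ring)

lemma cross3_triple (u v : EuclideanSpace ℝ (Fin 3)) :
    cross3 u (cross3 u v) = ⟪u,v⟫ • u - ⟪u,u⟫ • v := by
  ext i
  fin_cases i <;>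
    (simp only [PiLp.inner_apply, Fin.sum_univ_three]
     simp [cross3, PiLp.inner_apply, Fin.sum_univ_three, RCLike.inner_apply]; ring)

lemma cross3_smul_left (a : ℝ) (u v : EuclideanSpace ℝ (Fin 3)) :
    cross3 (a • u) v = a • cross3 u v := by
  ext i; fin_cases i <;> (simp [cross3]; ring)

lemma cross3_smul_right (a : ℝ) (u v : EuclideanSpace ℝ (Fin 3)) :
    cross3 u (a • v) = a • cross3 u v := by
  ext i; fin_cases i <;> (simp [cross3]; ring)

lemma cross3_neg_right (u v : EuclideanSpace ℝ (Fin 3)) :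
    cross3 u (-v) = -cross3 u v := by
  ext i; fin_cases i <;> (simp [cross3]; ring)

lemma cross3_add_right (u v w : EuclideanSpace ℝ (Fin 3)) :
    cross3 u (v + w) = cross3 u v + cross3 u w := by
  ext i; fin_cases i <;> (simp [cross3]; ring)

noncomputable def crossLM :
    EuclideanSpace ℝ (Fin 3) →ₗ[ℝ] EuclideanSpace ℝ (Fin 3) →ₗ[ℝ] EuclideanSpace ℝ (Fin 3) :=
  LinearMap.mk₂ ℝ cross3
    (by intro u u' v; ext i; fin_cases i <;> (simp [cross3]; ring))
    (by intro a u v; ext i; fin_cases i <;> (simp [cross3]; ring))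
    (by intro u v v'; ext i; fin_cases i <;> (simp [cross3]; ring))
    (by intro a u v; ext i; fin_cases i <;> (simp [cross3]; ring))

noncomputable def crossCLM1 (u : EuclideanSpace ℝ (Fin 3)) :
    EuclideanSpace ℝ (Fin 3) →L[ℝ] EuclideanSpace ℝ (Fin 3) :=
  LinearMap.toContinuousLinearMap (crossLM u)

noncomputable def crossCLM :
    EuclideanSpace ℝ (Fin 3) →L[ℝ] EuclideanSpace ℝ (Fin 3) →L[ℝ] EuclideanSpace ℝ (Fin 3) :=
  LinearMap.toContinuousLinearMap
    { toFun := crossCLM1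
      map_add' := by intro u u'; ext1 v; simp [crossCLM1, crossLM]
      map_smul' := by intro a u; ext1 v; simp [crossCLM1, crossLM] }

lemma hasDerivAt_cross3 {t n : ℝ → EuclideanSpace ℝ (Fin 3)}
    {t' n' : EuclideanSpace ℝ (Fin 3)} {s : ℝ}
    (h1 : HasDerivAt t t' s) (h2 : HasDerivAt n n' s) :
    HasDerivAt (fun u => cross3 (t u) (n u)) (cross3 t' (n s) + cross3 (t s) n') s := by
  have h3 : HasDerivAt (fun u => crossCLM (t u)) (crossCLM t') s :=
    crossCLM.hasFDerivAt.comp_hasDerivAt s h1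
  exact h3.clm_apply h2

theorem canal_surface_first_fundamental_form
    (c : ℝ → EuclideanSpace ℝ (Fin 3)) (r κ τ : ℝ → ℝ)
    (t n b : ℝ → EuclideanSpace ℝ (Fin 3))
    (hc : ContDiff ℝ (⊤ : ℕ∞) c) (hr : ContDiff ℝ (⊤ : ℕ∞) r)
    (harc : ∀ s, ‖deriv c s‖ = 1)
    (hκ : ∀ s, κ s = ‖deriv (deriv c) s‖)
    (hκpos : ∀ s, 0 < κ s)
    (ht : ∀ s, t s = deriv c s)
    (hn : ∀ s, n s = (κ s)⁻¹ • deriv (deriv c) s)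
    (hb : ∀ s, b s = cross3 (t s) (n s))
    (hτ : ∀ s, deriv n s = (-κ s) • t s + τ s • b s)
    (hrpos : ∀ s, 0 < r s)
    (hr1 : ∀ s, |deriv r s| < 1)
    (α : ℝ → ℝ → EuclideanSpace ℝ (Fin 3))
    (hα : ∀ s φ, α s φ = c s - (r s * deriv r s) • t s +
      (r s * Real.sqrt (1 - deriv r s ^ 2)) • (Real.cos φ • n s + Real.sin φ • b s)) :
    ∀ s φ,
      ⟪deriv (fun v => α s v) φ, deriv (fun v => α s v) φ⟫ =
        r s ^ 2 * (1 - deriv r s ^ 2) ∧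
      ⟪deriv (fun u => α u φ) s, deriv (fun v => α s v) φ⟫ =
        τ s * r s ^ 2 * (1 - deriv r s ^ 2) +
          κ s * deriv r s * r s ^ 2 * Real.sqrt (1 - deriv r s ^ 2) * Real.sin φ := by
  intro s φ
  -- smoothness bookkeeping
  have hc' : ContDiff ℝ (↑(⊤:ℕ∞)) c := hc.of_le (by simp)
  have hr' : ContDiff ℝ (↑(⊤:ℕ∞)) r := hr.of_le (by simp)
  have hone : (↑(⊤:ℕ∞) : WithTop ℕ∞) ≠ 0 := by simp
  have hc1 : Differentiable ℝ c := hc'.differentiable hone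
  have hcd : ContDiff ℝ (↑(⊤:ℕ∞)) (deriv c) := (contDiff_infty_iff_deriv.mp hc').2
  have hcdd : ContDiff ℝ (↑(⊤:ℕ∞)) (deriv (deriv c)) := (contDiff_infty_iff_deriv.mp hcd).2
  have hrd : ContDiff ℝ (↑(⊤:ℕ∞)) (deriv r) := (contDiff_infty_iff_deriv.mp hr').2
  have hκ0 : κ s ≠ 0 := (hκpos s).ne'
  have hc''ne : deriv (deriv c) s ≠ 0 := by
    intro h
    have h2 := hκpos s
    rw [hκ s, h, norm_zero] at h2
    exact lt_irrefl 0 h2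
  -- derivative facts for the frame
  have hct : HasDerivAt c (t s) s := by rw [ht]; exact (hc1 s).hasDerivAt
  have hκn : κ s • n s = deriv (deriv c) s := by
    rw [hn s, smul_smul, mul_inv_cancel₀ hκ0, one_smul]
  have ht' : HasDerivAt t (κ s • n s) s := by
    rw [funext ht, hκn]; exact ((hcd.differentiable hone) s).hasDerivAt
  have hκdiff : DifferentiableAt ℝ κ s := by
    rw [funext hκ]
    exact ((hcdd.differentiable hone) s).norm ℝ hc''ne
  have hndiff : DifferentiableAt ℝ n s := by
    rw [funext hn]
    exact (hκdiff.inv hκ0).smul ((hcdd.differentiable hone) s)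
  have hn' : HasDerivAt n ((-κ s) • t s + τ s • b s) s := by
    rw [← hτ s]; exact hndiff.hasDerivAt
  -- orthonormality at s
  have htt : ⟪t s, t s⟫ = 1 := by
    rw [real_inner_self_eq_norm_sq, ht s, harc s]; norm_num
  have hnn : ⟪n s, n s⟫ = 1 := by
    rw [real_inner_self_eq_norm_sq, hn s, norm_smul, Real.norm_eq_abs, abs_inv,
      abs_of_pos (hκpos s), ← hκ s, inv_mul_cancel₀ hκ0]
    norm_num
  have hc'c'' : ⟪deriv c s, deriv (deriv c) s⟫ = 0 := by
    have h1 : HasDerivAt (fun u => ⟪deriv c u, deriv c u⟫)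
        (⟪deriv c s, deriv (deriv c) s⟫ + ⟪deriv (deriv c) s, deriv c s⟫) s :=
      HasDerivAt.inner ℝ ((hcd.differentiable hone) s).hasDerivAt
        ((hcd.differentiable hone) s).hasDerivAt
    have h2 : (fun u => ⟪deriv c u, deriv c u⟫) = fun _ => (1:ℝ) := by
      funext u; rw [real_inner_self_eq_norm_sq, harc u]; norm_num
    rw [h2] at h1
    have h3 := h1.unique (hasDerivAt_const s (1:ℝ))
    rw [real_inner_comm (deriv (deriv c) s) (deriv c s)] at h3
    rw [real_inner_comm]
    linarith
  have htn : ⟪t s, n s⟫ = 0 := by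
    rw [ht s, hn s, real_inner_smul_right, hc'c'', mul_zero]
  have htb : ⟪t s, b s⟫ = 0 := by rw [hb s]; exact inner_cross3_left _ _
  have hnb : ⟪n s, b s⟫ = 0 := by rw [hb s]; exact inner_cross3_right _ _
  have hbb : ⟪b s, b s⟫ = 1 := by
    rw [hb s, inner_cross3_self, htt, hnn, htn]; norm_num
  have hnt : ⟪n s, t s⟫ = 0 := by rw [real_inner_comm]; exact htn
  have hbt : ⟪b s, t s⟫ = 0 := by rw [real_inner_comm]; exact htb
  have hbn : ⟪b s, n s⟫ = 0 := by rw [real_inner_comm]; exact hnb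
  have htcb : cross3 (t s) (b s) = -n s := by
    rw [hb s, cross3_triple, htn, htt]; simp
  have hb' : HasDerivAt b ((-τ s) • n s) s := by
    have h := hasDerivAt_cross3 ht' hn'
    rw [funext hb]
    convert h using 1
    simp only [cross3_smul_left, cross3_smul_right, cross3_add_right, cross3_neg_right,
      cross3_self, smul_zero, neg_zero, zero_add, htcb, smul_neg, neg_smul]
  -- scalar facts
  have hq0 : 0 < 1 - deriv r s ^ 2 := by
    have h := hr1 s
    nlinarith [sq_abs (deriv r s), abs_nonneg (deriv r s)]
  have hs2 : Real.sqrt (1 - deriv r s ^ 2) * Real.sqrt (1 - deriv r s ^ 2)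
      = 1 - deriv r s ^ 2 := Real.mul_self_sqrt hq0.le
  have hpyth : Real.sin φ ^ 2 + Real.cos φ ^ 2 = 1 := Real.sin_sq_add_cos_sq φ
  -- φ derivative
  have hDφ : HasDerivAt (fun v => α s v)
      ((r s * Real.sqrt (1 - deriv r s ^ 2)) •
        ((-Real.sin φ) • n s + Real.cos φ • b s)) φ := by
    have h2 : (fun v => α s v) = fun v => (c s - (r s * deriv r s) • t s) +
        (r s * Real.sqrt (1 - deriv r s ^ 2)) • (Real.cos v • n s + Real.sin v • b s) :=
      funext fun v => hα s v
    rw [h2]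
    have h3 := (hasDerivAt_const φ (c s - (r s * deriv r s) • t s)).add
      ((((Real.hasDerivAt_cos φ).smul_const (n s)).add
        ((Real.hasDerivAt_sin φ).smul_const (b s))).const_smul
          (r s * Real.sqrt (1 - deriv r s ^ 2)))
    rw [zero_add] at h3; exact h3
  -- s derivative
  have hrd1 : HasDerivAt r (deriv r s) s := ((hr'.differentiable hone) s).hasDerivAt
  have hrd2 : HasDerivAt (deriv r) (deriv (deriv r) s) s :=
    ((hrd.differentiable hone) s).hasDerivAt
  have hm := hrd1.mul hrd2
  have hqd := (hasDerivAt_const s (1:ℝ)).sub (hrd2.pow 2)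
  have hsqd := hqd.sqrt (ne_of_gt hq0)
  have hρ := hrd1.mul hsqd
  have hsmash : (fun u => α u φ) = fun u => c u - (r u * deriv r u) • t u +
      (r u * Real.sqrt (1 - deriv r u ^ 2)) • (Real.cos φ • n u + Real.sin φ • b u) :=
    funext fun u => hα u φ
  have hbig := (hct.sub (hm.smul ht')).add
    (hρ.smul ((hn'.const_smul (Real.cos φ)).add (hb'.const_smul (Real.sin φ))))
  constructor
  · rw [hDφ.deriv]
    simp only [inner_add_left, inner_add_right, real_inner_smul_left, real_inner_smul_right,
      htt, hnn, hbb, htn, hnb, htb, hnt, hbt, hbn]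
    ring_nf
    linear_combination (r s ^ 2 * (Real.sqrt (1 - deriv r s ^ 2))^2) * hpyth
      + (r s ^ 2) * hs2
  · rw [hsmash]; erw [hbig.deriv]; rw [hDφ.deriv]
    simp only [Pi.mul_apply, Pi.sub_apply, Pi.pow_apply, Pi.add_apply, Pi.smul_apply]
    simp only [inner_add_left, inner_add_right, inner_sub_left, inner_sub_right,
      real_inner_smul_left, real_inner_smul_right,
      htt, hnn, hbb, htn, hnb, htb, hnt, hbt, hbn]
    ring_nf
    linear_combination (τ s * r s ^ 2 * (Real.sqrt (1 - deriv r s ^ 2))^2) * hpyth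
      + (τ s * r s ^ 2) * hs2
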